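/- arXiv:2306.01619 — 6 statements merged into one kernel-verified Lean document; each statement's English description precedes it below -/
import Mathlib

section
/- For a Rose Window graph Γ = R_n(a,r), the following are equivalent: (i) Γ is bipartite; (ii) the canonical double cover Γ × K_2 is disconnected; (iii) n and a are even and r is odd. -/
open SimpleGraph

/-- The Rose Window graph `R_n(a,r)`. Vertices `Sum.inl i = uᵢ`, `Sum.inr i = vᵢ`. -/
def roseWindow (n : ℕ) (a r : ZMod n) : SimpleGraph (ZMod n ⊕ ZMod n) :=
  SimpleGraph.fromRel (fun x y =>
    match x, y with
    | Sum.inl i, Sum.inl i' => i' = i + 1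
    | Sum.inr i, Sum.inr i' => i' = i + r
    | Sum.inl i', Sum.inr i => i' = i ∨ i' = i + a
    | _, _ => False)

/-- The canonical double cover of a graph. -/
def cdc {V : Type*} (G : SimpleGraph V) : SimpleGraph (V × ZMod 2) where
  Adj x y := G.Adj x.1 y.1 ∧ x.2 ≠ y.2
  symm := ⟨fun x y h => ⟨h.1.symm, h.2.symm⟩⟩
  loopless := ⟨fun x h => h.2 rfl⟩

/-- The automorphism group of a graph, as a subgroup of the permutations of vertices. -/
def autSubgroup {V : Type*} (G : SimpleGraph V) : Subgroup (Equiv.Perm V) where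
  carrier := {σ | ∀ x y, G.Adj (σ x) (σ y) ↔ G.Adj x y}
  one_mem' := by intro x y; rfl
  mul_mem' := by
    intro σ τ hσ hτ x y
    simpa [Equiv.Perm.mul_apply] using (hσ (τ x) (τ y)).trans (hτ x y)
  inv_mem' := by
    intro σ hσ x y
    conv_rhs => rw [← (σ.apply_symm_apply x), ← (σ.apply_symm_apply y)]
    exact (hσ (σ⁻¹ x) (σ⁻¹ y)).symm

/-!
A walk in the canonical double cover from `(x, s)` to `(y, t)` projects to a walk from `x` to `y`
of length `≡ t - s (mod 2)`, and every walk of `Γ` lifts. Hence for connected `Γ` the cover is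
connected iff `Γ` has a closed walk of odd length, i.e. iff `Γ` is not bipartite.

The Rose Window graph is connected through its rim. A proper `ZMod 2`-colouring changes along
every edge; following the rim `u_0 u_1 ⋯ u_n = u_0`, the path `u_0 v_0 u_a` and the 4-cycle
`u_0 v_0 v_r u_r` forces `n ≡ 0`, `a ≡ 0`, `r ≡ 1 (mod 2)`. Conversely, under these parities,
`u_i ↦ i mod 2`, `v_i ↦ i + 1 mod 2` is well defined on `ZMod n` and proper.
-/

theorem ZMod.eq_add_one_of_ne {x y : ZMod 2} (h : x ≠ y) : y = x + 1 := by
  revert x y; decide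

namespace SimpleGraph

variable {V : Type*} {G : SimpleGraph V}

theorem Coloring.eq_add_one_of_adj (c : G.Coloring (ZMod 2)) {x y : V} (h : G.Adj x y) :
    c y = c x + 1 :=
  ZMod.eq_add_one_of_ne (c.valid h)

theorem colorable_two_iff_nonempty_coloring_zmod :
    G.Colorable 2 ↔ Nonempty (G.Coloring (ZMod 2)) :=
  ⟨fun h => ⟨h.toColoring (by simp)⟩, fun ⟨c⟩ => by simpa using c.colorable⟩

theorem cdc_reachable_of_walk {x y : V} (p : G.Walk x y) (s : ZMod 2) :
    (cdc G).Reachable (x, s) (y, s + p.length) := by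
  induction p generalizing s with
  | nil => simp
  | @cons u v w h q ih =>
    have hstep : (cdc G).Adj (u, s) (v, s + 1) := ⟨h, by simp⟩
    rw [Walk.length_cons, Nat.cast_succ, add_comm _ (1 : ZMod 2), ← add_assoc]
    exact hstep.reachable.trans (ih (s + 1))

theorem cdc_walk_length_cast {x y : V × ZMod 2} (p : (cdc G).Walk x y) :
    (p.length : ZMod 2) = y.2 - x.2 := by
  induction p with
  | nil => simp
  | cons h q ih =>
    rw [Walk.length_cons, Nat.cast_succ, ih, ZMod.eq_add_one_of_ne h.2]
    ring

theorem not_colorable_two_of_cdc_connected (h : (cdc G).Connected) : ¬G.Colorable 2 := by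
  rw [two_colorable_iff_forall_loop_even]
  intro hloops
  obtain ⟨v, -⟩ := h.nonempty
  obtain ⟨p⟩ := h.preconnected (v, 0) (v, 1)
  have hodd : Odd (p.map (⟨Prod.fst, And.left⟩ : cdc G →g G)).length := by
    rw [Walk.length_map, ← ZMod.natCast_eq_one_iff_odd, cdc_walk_length_cast]
    simp
  exact Nat.not_even_iff_odd.mpr hodd (hloops v _)

theorem cdc_connected_of_not_colorable_two (hG : G.Connected) (h : ¬G.Colorable 2) :
    (cdc G).Connected := by
  simp only [two_colorable_iff_forall_loop_even, not_forall, Nat.not_even_iff_odd] at h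
  obtain ⟨u, w, hodd⟩ := h
  have hflip (s t : ZMod 2) : (cdc G).Reachable (u, s) (u, t) := by
    obtain rfl | hst := eq_or_ne s t
    · rfl
    · simpa [ZMod.natCast_eq_one_iff_odd.mpr hodd, ← ZMod.eq_add_one_of_ne hst] using
        cdc_reachable_of_walk w s
  have hreach (y : V × ZMod 2) : (cdc G).Reachable (u, 0) y := by
    obtain ⟨p⟩ := hG.preconnected u y.1
    simpa using (hflip 0 (y.2 - p.length)).trans (cdc_reachable_of_walk p (y.2 - p.length))
  exact (connected_iff_exists_forall_reachable _).2 ⟨_, hreach⟩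

theorem cdc_connected_iff (hG : G.Connected) : (cdc G).Connected ↔ ¬G.Colorable 2 :=
  ⟨not_colorable_two_of_cdc_connected, cdc_connected_of_not_colorable_two hG⟩

end SimpleGraph

section RoseWindow

variable {n : ℕ} {a r : ZMod n}

theorem roseWindow_adj_inl_add_one (hn : 1 < n) (i : ZMod n) :
    (roseWindow n a r).Adj (.inl i) (.inl (i + 1)) := by
  have : Fact (1 < n) := ⟨hn⟩
  simp [roseWindow]

theorem roseWindow_adj_inl_inr (i : ZMod n) : (roseWindow n a r).Adj (.inl i) (.inr i) := by
  simp [roseWindow]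

theorem roseWindow_adj_inl_add_inr (i : ZMod n) :
    (roseWindow n a r).Adj (.inl (i + a)) (.inr i) := by
  simp [roseWindow]

theorem roseWindow_adj_inr_add (hr : r ≠ 0) (i : ZMod n) :
    (roseWindow n a r).Adj (.inr i) (.inr (i + r)) := by
  simp [roseWindow, hr]

theorem roseWindow_reachable_inl_natCast (hn : 1 < n) (k : ℕ) :
    (roseWindow n a r).Reachable (.inl 0) (.inl k) := by
  induction k with
  | zero => simp
  | succ k ih => simpa using ih.trans (roseWindow_adj_inl_add_one hn k).reachable

theorem roseWindow_connected (hn : 1 < n) : (roseWindow n a r).Connected := by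
  have : NeZero n := ⟨by omega⟩
  have hinl (i : ZMod n) : (roseWindow n a r).Reachable (.inl 0) (.inl i) := by
    simpa using roseWindow_reachable_inl_natCast hn i.val
  refine (connected_iff_exists_forall_reachable _).2 ⟨.inl 0, ?_⟩
  rintro (i | i)
  · exact hinl i
  · exact (hinl i).trans (roseWindow_adj_inl_inr i).reachable

end RoseWindow

section Parity

variable {n a r : ℕ}

theorem roseWindow_colorable_two_of_parity (hn : Even n) (ha : Even a) (hr : Odd r) :
    (roseWindow n a r).Colorable 2 := by
  let φ : ZMod n →+* ZMod 2 := ZMod.castHom hn.two_dvd (ZMod 2)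
  let c : ZMod n ⊕ ZMod n → ZMod 2 := Sum.elim φ (φ · + 1)
  have hA : φ a = 0 := by simpa [φ] using ha.natCast_zmod_two
  have hR : φ r = 1 := by simpa [φ] using hr.natCast_zmod_two
  have hvalid (x y) (hxy : (roseWindow n a r).Adj x y) : c x ≠ c y := by
    obtain ⟨-, h | h⟩ := fromRel_adj _ _ _ |>.1 hxy <;>
      rcases x with i | i <;> rcases y with j | j <;> simp at h
    all_goals (try obtain h | h := h) <;> subst_vars <;> simp [c, hA, hR]
  exact colorable_two_iff_nonempty_coloring_zmod.2 ⟨Coloring.mk c (hvalid _ _)⟩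

theorem roseWindow_parity_of_colorable_two (hn : 1 < n) (hr : (r : ZMod n) ≠ 0)
    (h : (roseWindow n a r).Colorable 2) : Even n ∧ Even a ∧ Odd r := by
  obtain ⟨c⟩ := colorable_two_iff_nonempty_coloring_zmod.1 h
  have hrim (k : ℕ) : c (.inl k) = c (.inl 0) + k := by
    induction k with
    | zero => simp
    | succ k ih =>
      rw [Nat.cast_succ, c.eq_add_one_of_adj (roseWindow_adj_inl_add_one hn _), ih,
        Nat.cast_succ, add_assoc]
  have hv₀ := c.eq_add_one_of_adj (roseWindow_adj_inl_inr 0)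
  have hva := c.eq_add_one_of_adj (roseWindow_adj_inl_add_inr 0)
  have hvr := c.eq_add_one_of_adj (roseWindow_adj_inr_add hr 0)
  have hvr' := c.eq_add_one_of_adj (roseWindow_adj_inl_inr (r : ZMod n))
  rw [zero_add, hrim] at hva
  rw [zero_add] at hvr
  have hn₀ := hrim n
  rw [ZMod.natCast_self] at hn₀
  rw [← ZMod.natCast_eq_zero_iff_even, ← ZMod.natCast_eq_zero_iff_even,
    ← ZMod.natCast_eq_one_iff_odd]
  exact ⟨by linear_combination -hn₀, by linear_combination hv₀ - hva,
    by linear_combination hvr - hvr' + hv₀ - hrim r⟩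

theorem roseWindow_colorable_two_iff (hn : 1 < n) (hr : (r : ZMod n) ≠ 0) :
    (roseWindow n a r).Colorable 2 ↔ Even n ∧ Even a ∧ Odd r :=
  ⟨roseWindow_parity_of_colorable_two hn hr,
    fun ⟨hn, ha, hr⟩ => roseWindow_colorable_two_of_parity hn ha hr⟩

end Parity

theorem roseWindow_bipartite_iff_general (n a r : ℕ) (hn : 3 ≤ n)
    (hr : (r : ZMod n) ≠ 0) :
    ((roseWindow n a r).Colorable 2 ↔ ¬ (cdc (roseWindow n a r)).Connected) ∧
    ((roseWindow n a r).Colorable 2 ↔ (Even n ∧ Even a ∧ Odd r)) := by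
  have hn' : 1 < n := by omega
  rw [cdc_connected_iff (roseWindow_connected hn'), not_not]
  exact ⟨Iff.rfl, roseWindow_colorable_two_iff hn' hr⟩

/-- `R_n(a,r)` is bipartite iff its canonical double cover is disconnected
iff `n, a` are even and `r` is odd. -/
theorem roseWindow_bipartite_iff (n a r : ℕ) (hn : 3 ≤ n) (han : a < n) (hrn : r < n)
    (ha : (a : ZMod n) ≠ 0) (hr : (r : ZMod n) ≠ 0) :
    ((roseWindow n a r).Colorable 2 ↔ ¬ (cdc (roseWindow n a r)).Connected) ∧
    ((roseWindow n a r).Colorable 2 ↔ (Even n ∧ Even a ∧ Odd r)) :=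
  roseWindow_bipartite_iff_general n a r hn hr
end

section
/- Let Γ = R_n(a,r). In the canonical double cover CDC(Γ), the subgraph induced by the spoke edges {u_{i,j},v_{i,j+1}} and {u_{i+a,j},v_{i,j+1}} is a disjoint union of cycles, each of length 2n/gcd(a,n). -/
open SimpleGraph

/-- The subgraph of `CDC(R_n(a,r))` spanned by the spoke edges
`{u_{i,j}, v_{i,j+1}}` and `{u_{i+a,j}, v_{i,j+1}}`. -/
def spokeGraph (n : ℕ) (a : ZMod n) : SimpleGraph ((ZMod n ⊕ ZMod n) × ZMod 2) :=
  SimpleGraph.fromRel (fun x y =>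
    ∃ (i : ZMod n) (j : ZMod 2),
      (x = (Sum.inl i, j) ∧ y = (Sum.inr i, j + 1)) ∨
      (x = (Sum.inl (i + a), j) ∧ y = (Sum.inr i, j + 1)))

/-!
Following the two kinds of spokes alternately from `u_{i,j}` gives the walk
`u_{i,j}, v_{i,j+1}, u_{i+a,j}, v_{i+a,j+1}, u_{i+2a,j}, …`, indexed by `k : ℤ` (`spokeWalk`).
The spoke neighbours of its `k`-th vertex are exactly its `(k ± 1)`-st vertices, so the walk
sweeps out a whole component, and two of its vertices coincide exactly when their indices agree
modulo `2 · addOrderOf a = 2n / gcd(a, n)`. A bi-infinite walk with these two properties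
parametrizes its component as a cycle of that length.
-/

namespace SimpleGraph

variable {V : Type*} {G : SimpleGraph V} {ψ : ℤ → V}

theorem reachable_of_forall_adj_add_one (hadj : ∀ k, G.Adj (ψ k) (ψ (k + 1))) (k l : ℤ) :
    G.Reachable (ψ k) (ψ l) := by
  suffices h : ∀ l, G.Reachable (ψ 0) (ψ l) from (h k).symm.trans (h l)
  intro l
  induction l using Int.induction_on with
  | zero => rfl
  | succ l ih => exact ih.trans (hadj l).reachable
  | pred l ih => exact ih.trans (by simpa using (hadj (-l - 1)).reachable.symm)

theorem supp_connectedComponentMk_eq_range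
    (hnbr : ∀ k z, G.Adj (ψ k) z ↔ z = ψ (k + 1) ∨ z = ψ (k - 1)) (k : ℤ) :
    (G.connectedComponentMk (ψ k)).supp = Set.range ψ := by
  ext y
  rw [ConnectedComponent.mem_supp_iff, ConnectedComponent.eq]
  constructor
  · rintro ⟨w⟩
    suffices h : ∀ u v (w : G.Walk u v), u ∈ Set.range ψ → v ∈ Set.range ψ from
      h _ _ w.reverse ⟨k, rfl⟩
    intro u v w
    induction w with
    | nil => exact id
    | cons h _ ih =>
      rintro ⟨l, rfl⟩
      obtain rfl | rfl := (hnbr l _).1 h <;> exact ih ⟨_, rfl⟩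
  · rintro ⟨l, rfl⟩
    exact reachable_of_forall_adj_add_one (fun k => (hnbr k _).2 (.inl rfl)) l k

theorem nonempty_induce_supp_iso_cycleGraph {m : ℕ}
    (hnbr : ∀ k z, G.Adj (ψ k) z ↔ z = ψ (k + 1) ∨ z = ψ (k - 1))
    (hψ : ∀ k l, ψ k = ψ l ↔ k ≡ l [ZMOD (m + 2 : ℕ)]) (k : ℤ) :
    Nonempty (G.induce (G.connectedComponentMk (ψ k)).supp ≃g cycleGraph (m + 2)) := by
  have hψ' (p q : ℤ) : ψ p = ψ q ↔ (p : ZMod (m + 2)) = q :=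
    (hψ p q).trans (ZMod.intCast_eq_intCast_iff p q _).symm
  let f : ZMod (m + 2) → V := fun x => ψ x.cast
  have hf (l : ℤ) : f l = ψ l := (hψ' _ _).2 (ZMod.intCast_zmod_cast _)
  have hf_inj : f.Injective := fun x y h => by
    simpa only [ZMod.intCast_zmod_cast] using (hψ' _ _).1 h
  have hf_adj (x y : ZMod (m + 2)) : G.Adj (f x) (f y) ↔ (cycleGraph (m + 2)).Adj x y := by
    obtain ⟨l, rfl⟩ := ZMod.intCast_surjective x
    -- `ZMod (m + 2)` is definitionally `Fin (m + 2)`, the vertex type of `cycleGraph (m + 2)`.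
    change _ ↔ (l : ZMod (m + 2)) - y = 1 ∨ y - l = 1
    rw [hf, hnbr, ← hf, ← hf, hf_inj.eq_iff, hf_inj.eq_iff]
    push_cast
    rw [sub_eq_iff_eq_add', sub_eq_iff_eq_add', eq_sub_iff_add_eq, eq_comm]
    tauto
  let φ : cycleGraph (m + 2) ↪g G := ⟨⟨f, hf_inj⟩, hf_adj _ _⟩
  have hrange : Set.range φ = (G.connectedComponentMk (ψ k)).supp := by
    rw [supp_connectedComponentMk_eq_range hnbr]
    exact (ZMod.intCast_surjective.range_comp f).symm.trans (congrArg Set.range (funext hf))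
  rw [← hrange]
  exact ⟨φ.isoInduceRange.symm⟩

end SimpleGraph

section Spokes

variable {n : ℕ} (a : ZMod n)

theorem spokeGraph_adj_inl {i : ZMod n} {j : ZMod 2} {z : (ZMod n ⊕ ZMod n) × ZMod 2} :
    (spokeGraph n a).Adj (.inl i, j) z ↔ z = (.inr i, j + 1) ∨ z = (.inr (i - a), j + 1) := by
  obtain ⟨_ | _, _⟩ := z <;> simp [spokeGraph, exists_or, and_assoc, eq_sub_iff_add_eq, eq_comm]

theorem spokeGraph_adj_inr {i : ZMod n} {j : ZMod 2} {z : (ZMod n ⊕ ZMod n) × ZMod 2} :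
    (spokeGraph n a).Adj (.inr i, j) z ↔ z = (.inl i, j + 1) ∨ z = (.inl (i + a), j + 1) := by
  obtain ⟨_ | _, _⟩ := z <;> simp [spokeGraph, exists_or, and_assoc]
  grind

def spokeWalk (i : ZMod n) (j : ZMod 2) (k : ℤ) : (ZMod n ⊕ ZMod n) × ZMod 2 :=
  (if Even k then .inl (i + (k / 2) • a) else .inr (i + (k / 2) • a), j + k)

variable (i : ZMod n) (j : ZMod 2)

theorem spokeWalk_two_mul (t : ℤ) : spokeWalk a i j (2 * t) = (.inl (i + t • a), j) := by
  simp [spokeWalk, CharTwo.two_eq_zero]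

theorem spokeWalk_two_mul_add_one (t : ℤ) :
    spokeWalk a i j (2 * t + 1) = (.inr (i + t • a), j + 1) := by
  have h : (2 * t + 1) / 2 = t := by omega
  simp [spokeWalk, h, CharTwo.two_eq_zero]

theorem spokeGraph_adj_spokeWalk_iff (k : ℤ) (z : (ZMod n ⊕ ZMod n) × ZMod 2) :
    (spokeGraph n a).Adj (spokeWalk a i j k) z ↔
      z = spokeWalk a i j (k + 1) ∨ z = spokeWalk a i j (k - 1) := by
  obtain ⟨t, rfl | rfl⟩ := Int.even_or_odd' k
  · rw [spokeWalk_two_mul, spokeGraph_adj_inl, show 2 * t - 1 = 2 * (t - 1) + 1 by ring,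
      spokeWalk_two_mul_add_one, spokeWalk_two_mul_add_one, sub_one_zsmul, ← sub_eq_add_neg,
      add_sub_assoc]
  · rw [spokeWalk_two_mul_add_one, spokeGraph_adj_inr, show 2 * t + 1 + 1 = 2 * (t + 1) by ring,
      add_sub_cancel_right, spokeWalk_two_mul, spokeWalk_two_mul, add_zsmul, one_zsmul, ← add_assoc,
      CharTwo.add_cancel_right, or_comm]

theorem spokeWalk_eq_spokeWalk_iff (k l : ℤ) :
    spokeWalk a i j k = spokeWalk a i j l ↔ k ≡ l [ZMOD (2 * addOrderOf a : ℕ)] := by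
  push_cast
  have hpar (s t : ℤ) : ¬2 * s ≡ 2 * t + 1 [ZMOD 2 * addOrderOf a] := fun h => by
    have := h.of_mul_right _
    rw [Int.ModEq] at this
    omega
  have hzsmul (s t : ℤ) : s • a = t • a ↔ 2 * s ≡ 2 * t [ZMOD 2 * addOrderOf a] := by
    rw [zsmul_eq_zsmul_iff_modEq, Int.ModEq.mul_left_cancel_iff' two_ne_zero]
  obtain ⟨s, rfl | rfl⟩ := Int.even_or_odd' k <;> obtain ⟨t, rfl | rfl⟩ := Int.even_or_odd' l
  · simp only [spokeWalk_two_mul, Prod.mk.injEq, Sum.inl.injEq, add_right_inj, and_true, hzsmul]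
  · simp only [spokeWalk_two_mul, spokeWalk_two_mul_add_one, Prod.mk.injEq, reduceCtorEq,
      false_and, false_iff]
    exact hpar s t
  · simp only [spokeWalk_two_mul, spokeWalk_two_mul_add_one, Prod.mk.injEq, reduceCtorEq,
      false_and, false_iff]
    exact fun h => hpar t s h.symm
  · simp only [spokeWalk_two_mul_add_one, Prod.mk.injEq, Sum.inr.injEq, add_right_inj, and_true,
      hzsmul]
    exact ⟨Int.ModEq.add_right 1, Int.ModEq.add_right_cancel' 1⟩

theorem exists_spokeWalk_eq (x : (ZMod n ⊕ ZMod n) × ZMod 2) :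
    ∃ i j k, spokeWalk a i j k = x := by
  obtain ⟨i | i, j⟩ := x
  · exact ⟨i, j, 0, by simpa using spokeWalk_two_mul a i j 0⟩
  · refine ⟨i, j + 1, 1, ?_⟩
    simpa [CharTwo.add_cancel_right] using spokeWalk_two_mul_add_one a i (j + 1) 0

theorem nonempty_induce_supp_spokeGraph_iso_cycleGraph [NeZero n] (k : ℤ) :
    Nonempty ((spokeGraph n a).induce
        ((spokeGraph n a).connectedComponentMk (spokeWalk a i j k)).supp ≃g
      cycleGraph (2 * addOrderOf a)) := by
  obtain ⟨m, hm⟩ : ∃ m, 2 * addOrderOf a = m + 2 :=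
    ⟨2 * addOrderOf a - 2, by have := addOrderOf_pos a; omega⟩
  rw [hm]
  refine nonempty_induce_supp_iso_cycleGraph (spokeGraph_adj_spokeWalk_iff a i j) (fun k l => ?_) k
  rw [spokeWalk_eq_spokeWalk_iff, hm]

end Spokes

theorem spoke_cycles_general (n a : ℕ) (hn : 3 ≤ n) :
    ∀ x : (ZMod n ⊕ ZMod n) × ZMod 2,
      Nonempty ((SimpleGraph.induce
          ((spokeGraph n a).connectedComponentMk x).supp (spokeGraph n a)) ≃g
        SimpleGraph.cycleGraph (2 * n / Nat.gcd a n)) := by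
  have : NeZero n := ⟨by omega⟩
  have hlen : 2 * n / Nat.gcd a n = 2 * addOrderOf (a : ZMod n) := by
    rw [ZMod.addOrderOf_coe a (NeZero.ne n), Nat.gcd_comm,
      Nat.mul_div_assoc _ (Nat.gcd_dvd_left n a)]
  intro x
  obtain ⟨i, j, k, rfl⟩ := exists_spokeWalk_eq (a : ZMod n) x
  rw [hlen]
  exact nonempty_induce_supp_spokeGraph_iso_cycleGraph _ i j k

/-- the spoke edges of `CDC(R_n(a,r))` form a disjoint union of cycles,
each of length `2n/gcd(a,n)`. -/
theorem spoke_cycles (n a r : ℕ) (hn : 3 ≤ n) (ha : (a : ZMod n) ≠ 0) (hr : (r : ZMod n) ≠ 0) :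
    ∀ x : (ZMod n ⊕ ZMod n) × ZMod 2,
      Nonempty ((SimpleGraph.induce
          ((spokeGraph n a).connectedComponentMk x).supp (spokeGraph n a)) ≃g
        SimpleGraph.cycleGraph (2 * n / Nat.gcd a n)) :=
  spoke_cycles_general n a hn
end

section
/- Let Γ be a connected non-bipartite graph and let β be the automorphism of CDC(Γ) swapping (v,0) and (v,1) for all vertices v. Then an automorphism σ of CDC(Γ) is expected (i.e., lies in the subgroup generated by β and the lifts of automorphisms of Γ) if and only if σβ = βσ. -/
open SimpleGraph

/-! Commuting with `β` means `σ (v, i) = (f v, c v + i)`. The edge `(u, 0) — (v, 1)` must go to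
an edge between different layers, so `c u = c v` whenever `u ~ v`, and `c` is constant by
connectivity. Then `f` is an automorphism of `Γ` and `σ = β ^ c ∘ (f × id)`. -/

theorem SimpleGraph.Reachable.eq_of_forall_adj_eq {V α : Type*} {G : SimpleGraph V} {f : V → α}
    (hf : ∀ u v, G.Adj u v → f u = f v) {u v : V} (h : G.Reachable u v) : f u = f v := by
  obtain ⟨p⟩ := h
  induction p with
  | nil => rfl
  | cons huv _ ih => exact (hf _ _ huv).trans ih

theorem Equiv.commute_prodCongr_refl {α β : Type*} (e : Equiv.Perm α) (f : Equiv.Perm β) :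
    Commute (Equiv.prodCongr e (Equiv.refl β)) (Equiv.prodCongr (Equiv.refl α) f) :=
  Equiv.ext fun _ => rfl

namespace CDC

variable {V : Type*} {G : SimpleGraph V}

variable (V) in
def shift (c : ZMod 2) : Equiv.Perm (V × ZMod 2) :=
  Equiv.prodCongr (Equiv.refl V) (Equiv.addLeft c)

def lift (α : G ≃g G) : Equiv.Perm (V × ZMod 2) :=
  Equiv.prodCongr α.toEquiv (Equiv.refl (ZMod 2))

@[simp]
theorem shift_apply (c : ZMod 2) (x : V × ZMod 2) : shift V c x = (x.1, c + x.2) := rfl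

theorem shift_eq_pow_val (c : ZMod 2) : shift V c = shift V 1 ^ c.val := by
  fin_cases c
  · show shift V 0 = shift V 1 ^ 0
    ext x <;> simp
  · exact (pow_one _).symm

theorem closure_le_centralizer_shift_one :
    Subgroup.closure ({shift V 1} ∪ {σ | ∃ α : G ≃g G, σ = lift α}) ≤
      Subgroup.centralizer {shift V 1} := by
  refine (Subgroup.closure_le _).mpr ?_
  rintro τ (rfl | ⟨α, rfl⟩) <;> rw [SetLike.mem_coe, Subgroup.mem_centralizer_singleton_iff]
  exact Equiv.commute_prodCongr_refl α.toEquiv (Equiv.addLeft 1)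

theorem apply_eq_shift_apply {σ : Equiv.Perm (V × ZMod 2)} (hσ : Commute σ (shift V 1))
    (v : V) (i : ZMod 2) : σ (v, i) = shift V i (σ (v, 0)) := by
  have hσi : Commute σ (shift V i) := shift_eq_pow_val (V := V) i ▸ hσ.pow_right _
  simpa using congrFun (congrArg DFunLike.coe hσi) (v, 0)

theorem snd_apply_eq_of_adj {σ : Equiv.Perm (V × ZMod 2)} (hσ : σ ∈ autSubgroup (cdc G))
    (hβ : Commute σ (shift V 1)) {u v : V} (huv : G.Adj u v) :
    (σ (u, 0)).2 = (σ (v, 0)).2 := by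
  have hadj : (cdc G).Adj (σ (u, 0)) (σ (v, 1)) := (hσ (u, 0) (v, 1)).mpr ⟨huv, zero_ne_one⟩
  rw [apply_eq_shift_apply hβ v 1] at hadj
  have eq_of_ne_one_add : ∀ a b : ZMod 2, a ≠ 1 + b → a = b := by decide
  exact eq_of_ne_one_add _ _ hadj.2

theorem exists_eq_shift_mul_lift {σ : Equiv.Perm (V × ZMod 2)} (hσ : σ ∈ autSubgroup (cdc G))
    (hβ : Commute σ (shift V 1)) {c : ZMod 2} (hc : ∀ v, (σ (v, 0)).2 = c) :
    ∃ α : G ≃g G, σ = shift V c * lift α := by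
  set f : V → V := fun v => (σ (v, 0)).1
  have hf : ∀ v i, σ (v, i) = (f v, i + c) := fun v i => by
    rw [apply_eq_shift_apply hβ, shift_apply, hc]
  have f_injective : Function.Injective f := fun u v huv =>
    congrArg Prod.fst (σ.injective (by rw [hf, hf, huv]) : ((u, 0) : V × ZMod 2) = (v, 0))
  have f_surjective : Function.Surjective f := fun w => by
    obtain ⟨⟨v, i⟩, hv⟩ := σ.surjective (w, 0)
    exact ⟨v, congrArg Prod.fst ((hf v i).symm.trans hv)⟩
  have map_adj : ∀ u v, G.Adj (f u) (f v) ↔ G.Adj u v := fun u v => by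
    simpa [cdc, hf] using hσ (u, 0) (v, 1)
  exact ⟨⟨Equiv.ofBijective f ⟨f_injective, f_surjective⟩, map_adj _ _⟩,
    Equiv.ext fun ⟨v, i⟩ => (hf v i).trans (Prod.ext rfl (add_comm i c))⟩

end CDC

theorem expected_iff_commutes_general {V : Type*} (G : SimpleGraph V)
    (hconn : G.Connected) :
    let β : Equiv.Perm (V × ZMod 2) := Equiv.prodCongr (Equiv.refl V) (Equiv.addLeft 1)
    let lifts : Set (Equiv.Perm (V × ZMod 2)) :=
      {σ | ∃ α : G ≃g G, σ = Equiv.prodCongr α.toEquiv (Equiv.refl (ZMod 2))}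
    ∀ σ ∈ autSubgroup (cdc G),
      σ ∈ Subgroup.closure ({β} ∪ lifts) ↔ σ * β = β * σ := by
  intro β lifts σ hσ
  refine ⟨fun h => Subgroup.mem_centralizer_singleton_iff.mp
    (CDC.closure_le_centralizer_shift_one h), fun hβ => ?_⟩
  obtain ⟨v₀⟩ := hconn.nonempty
  have hc : ∀ v, (σ (v, 0)).2 = (σ (v₀, 0)).2 := fun v =>
    (hconn.preconnected v v₀).eq_of_forall_adj_eq fun _ _ => CDC.snd_apply_eq_of_adj hσ hβ
  obtain ⟨α, hα⟩ := CDC.exists_eq_shift_mul_lift hσ hβ hc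
  rw [hα]
  have hβ_mem : β ∈ Subgroup.closure ({β} ∪ lifts) := Subgroup.subset_closure (Or.inl rfl)
  refine Subgroup.mul_mem _ ?_ (Subgroup.subset_closure (Or.inr ⟨α, rfl⟩))
  rw [CDC.shift_eq_pow_val]
  exact Subgroup.pow_mem _ hβ_mem _

/-- for a connected non-bipartite `Γ`, an automorphism `σ` of `CDC(Γ)` is
expected iff it commutes with the canonical involution `β`. -/
theorem expected_iff_commutes {V : Type*} [Fintype V] (G : SimpleGraph V)
    (hconn : G.Connected) (hnb : ¬ G.Colorable 2) :
    let β : Equiv.Perm (V × ZMod 2) := Equiv.prodCongr (Equiv.refl V) (Equiv.addLeft 1)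
    let lifts : Set (Equiv.Perm (V × ZMod 2)) :=
      {σ | ∃ α : G ≃g G, σ = Equiv.prodCongr α.toEquiv (Equiv.refl (ZMod 2))}
    ∀ σ ∈ autSubgroup (cdc G),
      σ ∈ Subgroup.closure ({β} ∪ lifts) ↔ σ * β = β * σ :=
  expected_iff_commutes_general G hconn
end

section
/- Let Γ be a connected non-bipartite graph. An automorphism σ of CDC(Γ) is expected if and only if for every vertex v of Γ there exists a vertex w of Γ with σ({(v,0),(v,1)}) = {(w,0),(w,1)}. -/
open SimpleGraph

/-!
An expected automorphism acts as `(v, i) ↦ (α v, i + c)` and so permutes the fibers. Conversely,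
a permutation permuting the fibers has the form `(v, i) ↦ (a v, i + t v)`; if it is an
automorphism of `CDC(Γ)`, comparing the images of the edges `(v, 0) ~ (w, 1)` shows that `a` is an
automorphism of `Γ` and that `t` is constant along edges, hence constant as `Γ` is connected.
-/

theorem zmod_two_eq_zero_or_eq_one (i : ZMod 2) : i = 0 ∨ i = 1 := by
  revert i; decide

namespace SimpleGraph

variable {V : Type*}

theorem Reachable.eq_of_forall_adj {β : Type*} {G : SimpleGraph V} {f : V → β}
    (hf : ∀ v w, G.Adj v w → f v = f w) {u v : V} (h : G.Reachable u v) : f u = f v := by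
  obtain ⟨p⟩ := h
  induction p with
  | nil => rfl
  | cons hadj _ ih => exact (hf _ _ hadj).trans ih

def expectedAut {A : Type*} [AddGroup A] (G : SimpleGraph V) : Subgroup (Equiv.Perm (V × A)) where
  carrier := {σ | ∃ (α : G ≃g G) (c : A), ∀ v i, σ (v, i) = (α v, i + c)}
  one_mem' := ⟨RelIso.refl _, 0, fun _ _ => by simp⟩
  mul_mem' := by
    rintro σ τ ⟨α, c, hσ⟩ ⟨β, d, hτ⟩
    exact ⟨β.trans α, d + c, fun v i => by simp [hσ, hτ, add_assoc]⟩
  inv_mem' := by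
    rintro σ ⟨α, c, hσ⟩
    refine ⟨α.symm, -c, fun v i => Equiv.Perm.inv_eq_iff_eq.mpr ?_⟩
    simp [hσ]

theorem closure_eq_expectedAut (G : SimpleGraph V) :
    Subgroup.closure ({Equiv.prodCongr (Equiv.refl V) (Equiv.addLeft (1 : ZMod 2))} ∪
      {σ | ∃ α : G ≃g G, σ = Equiv.prodCongr α.toEquiv (Equiv.refl (ZMod 2))}) =
      expectedAut G := by
  apply le_antisymm
  · rw [Subgroup.closure_le]
    rintro σ (rfl | ⟨α, rfl⟩)
    · exact ⟨RelIso.refl _, 1, fun v i => by simp [add_comm]⟩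
    · exact ⟨α, 0, fun v i => by simp⟩
  · rintro σ ⟨α, c, hσ⟩
    rcases zmod_two_eq_zero_or_eq_one c with rfl | rfl
    · obtain rfl : σ = Equiv.prodCongr α.toEquiv (Equiv.refl (ZMod 2)) := by
        ext ⟨v, i⟩ <;> simp [hσ]
      exact Subgroup.subset_closure (Or.inr ⟨α, rfl⟩)
    · obtain rfl : σ = Equiv.prodCongr (Equiv.refl V) (Equiv.addLeft 1) *
          Equiv.prodCongr α.toEquiv (Equiv.refl (ZMod 2)) := by
        ext ⟨v, i⟩ <;> simp [hσ, add_comm]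
      exact mul_mem (Subgroup.subset_closure (Or.inl rfl))
        (Subgroup.subset_closure (Or.inr ⟨α, rfl⟩))

theorem mem_pair_fiber_iff {x : V × ZMod 2} {w : V} :
    x ∈ ({(w, 0), (w, 1)} : Set (V × ZMod 2)) ↔ x.1 = w := by
  rcases x with ⟨u, j⟩
  rcases zmod_two_eq_zero_or_eq_one j with rfl | rfl <;> simp [Prod.ext_iff]

theorem maps_fibers_iff {σ : Equiv.Perm (V × ZMod 2)} :
    (∀ v, ∃ w, σ '' {(v, 0), (v, 1)} = {(w, 0), (w, 1)}) ↔
      ∃ (a : V → V) (t : V → ZMod 2), ∀ v i, σ (v, i) = (a v, i + t v) := by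
  constructor
  · intro h
    choose a ha using h
    have hfst (v : V) (i : ZMod 2) (hi : i = 0 ∨ i = 1) : (σ (v, i)).1 = a v :=
      mem_pair_fiber_iff.mp (ha v ▸ Set.mem_image_of_mem σ (by simpa using hi))
    refine ⟨a, fun v => (σ (v, 0)).2, fun v i => ?_⟩
    have hsnd : (σ (v, 1)).2 ≠ (σ (v, 0)).2 := fun h =>
      absurd (σ.injective (Prod.ext ((hfst v 1 (.inr rfl)).trans (hfst v 0 (.inl rfl)).symm) h))
        (by simp)
    rcases zmod_two_eq_zero_or_eq_one i with rfl | rfl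
    · exact Prod.ext (hfst v 0 (.inl rfl)) (zero_add _).symm
    · have hother : ∀ x y : ZMod 2, x ≠ y → x = 1 + y := by decide
      exact Prod.ext (hfst v 1 (.inr rfl)) (hother _ _ hsnd)
  · rintro ⟨a, t, h⟩ v
    refine ⟨a v, ?_⟩
    rw [Set.image_pair, h, h]
    rcases zmod_two_eq_zero_or_eq_one (t v) with hc | hc <;> rw [hc]
    · simp
    · rw [show (1 + 1 : ZMod 2) = 0 from rfl]
      simp [Set.pair_comm]

section ApplyEq

variable {G : SimpleGraph V} {σ : Equiv.Perm (V × ZMod 2)} {a : V → V} {t : V → ZMod 2}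

theorem bijective_of_apply_eq (h : ∀ v i, σ (v, i) = (a v, i + t v)) : a.Bijective := by
  constructor
  · intro v w hvw
    have : σ (v, 0) = σ (w, t v - t w) := by simp [h, hvw]
    exact congrArg Prod.fst (σ.injective this)
  · intro w
    obtain ⟨⟨v, i⟩, hv⟩ := σ.surjective (w, 0)
    exact ⟨v, by simpa [h] using congrArg Prod.fst hv⟩

variable (hσ : σ ∈ autSubgroup (cdc G)) (h : ∀ v i, σ (v, i) = (a v, i + t v))
include hσ h

theorem adj_iff_of_apply_eq (v w : V) : G.Adj (a v) (a w) ↔ G.Adj v w := by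
  constructor
  · intro hadj
    -- the layer of `(w, _)` is chosen so that its image and that of `(v, 0)` lie in different layers
    have hlayer : ∀ x y : ZMod 2, 0 + x ≠ (x + y + 1) + y := by decide
    have hcdc : (cdc G).Adj (σ (v, 0)) (σ (w, t v + t w + 1)) := by
      rw [h, h]; exact ⟨hadj, hlayer _ _⟩
    exact ((hσ _ _).mp hcdc).1
  · intro hadj
    have hcdc : (cdc G).Adj (σ (v, 0)) (σ (w, 1)) := (hσ _ _).mpr ⟨hadj, zero_ne_one⟩
    rw [h, h] at hcdc
    exact hcdc.1

theorem eq_of_adj_of_apply_eq {v w : V} (hadj : G.Adj v w) : t v = t w := by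
  have hcdc : (cdc G).Adj (σ (v, 0)) (σ (w, 1)) := (hσ _ _).mpr ⟨hadj, zero_ne_one⟩
  rw [h, h] at hcdc
  have hlayer : ∀ x y : ZMod 2, 0 + x ≠ 1 + y → x = y := by decide
  exact hlayer _ _ hcdc.2

end ApplyEq

theorem mem_expectedAut_iff_maps_fibers {G : SimpleGraph V} (hconn : G.Connected)
    {σ : Equiv.Perm (V × ZMod 2)} (hσ : σ ∈ autSubgroup (cdc G)) :
    σ ∈ expectedAut G ↔ ∀ v, ∃ w, σ '' {(v, 0), (v, 1)} = {(w, 0), (w, 1)} := by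
  rw [maps_fibers_iff]
  constructor
  · rintro ⟨α, c, h⟩
    exact ⟨α, fun _ => c, h⟩
  · rintro ⟨a, t, h⟩
    obtain ⟨v₀⟩ := hconn.nonempty
    let α : G ≃g G :=
      ⟨Equiv.ofBijective a (bijective_of_apply_eq h), fun {v w} => adj_iff_of_apply_eq hσ h v w⟩
    refine ⟨α, t v₀, fun v i => ?_⟩
    rw [h, (hconn.preconnected v v₀).eq_of_forall_adj (fun _ _ => eq_of_adj_of_apply_eq hσ h)]
    rfl

end SimpleGraph

theorem expected_iff_fibers_general {V : Type*} (G : SimpleGraph V)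
    (hconn : G.Connected) :
    let β : Equiv.Perm (V × ZMod 2) := Equiv.prodCongr (Equiv.refl V) (Equiv.addLeft 1)
    let lifts : Set (Equiv.Perm (V × ZMod 2)) :=
      {σ | ∃ α : G ≃g G, σ = Equiv.prodCongr α.toEquiv (Equiv.refl (ZMod 2))}
    ∀ σ ∈ autSubgroup (cdc G),
      σ ∈ Subgroup.closure ({β} ∪ lifts) ↔
        ∀ v : V, ∃ w : V,
          (σ : V × ZMod 2 → V × ZMod 2) '' {(v, 0), (v, 1)} = {(w, 0), (w, 1)} := by
  intro β lifts σ hσ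
  rw [show Subgroup.closure ({β} ∪ lifts) = expectedAut G from closure_eq_expectedAut G]
  exact mem_expectedAut_iff_maps_fibers hconn hσ

/-- Huang–Marušič: for a connected non-bipartite `Γ`, an automorphism `σ`
of `CDC(Γ)` is expected iff `σ` maps every fiber `{(v,0),(v,1)}` onto a fiber. -/
theorem expected_iff_fibers {V : Type*} [Fintype V] (G : SimpleGraph V)
    (hconn : G.Connected) (hnb : ¬ G.Colorable 2) :
    let β : Equiv.Perm (V × ZMod 2) := Equiv.prodCongr (Equiv.refl V) (Equiv.addLeft 1)
    let lifts : Set (Equiv.Perm (V × ZMod 2)) :=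
      {σ | ∃ α : G ≃g G, σ = Equiv.prodCongr α.toEquiv (Equiv.refl (ZMod 2))}
    ∀ σ ∈ autSubgroup (cdc G),
      σ ∈ Subgroup.closure ({β} ∪ lifts) ↔
        ∀ v : V, ∃ w : V,
          (σ : V × ZMod 2 → V × ZMod 2) '' {(v, 0), (v, 1)} = {(w, 0), (w, 1)} :=
  expected_iff_fibers_general G hconn
end

section
/- Let Γ = R_n(a,r) with n = 2m even, a even, r even, 2a ≢ 0 (mod n), and 4r ≢ 0 (mod n). Set S_1 = {u_{i,j} : i ≡ j (mod 2)} and S_2 = {u_{i,j} : i ≢ j (mod 2)} in CDC(Γ). Then the only automorphism of CDC(Γ) fixing S_1 pointwise and S_2 setwise is the identity. -/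
/-!
A vertex that is the only possible non-fixed common neighbour of two fixed vertices is fixed,
and this propagates from the fixed rim vertices `(u_i, j)`, `p i = j`, to the whole graph, where
`p : ZMod n → ZMod 2` is the parity (a ring map as `n` is even, with `p a = p r = 0`):
the hub `(v_i, j)` with `p i ≠ j` is pinned by `(u_i, j+1)` and `(u_{i+a}, j+1)` since `2a ≠ 0`;
the hub `(v_i, j)` with `p i = j` by `(v_{i±r}, j+1)` since `4r ≠ 0`;
and then every rim vertex `(u_i, j)` by `(v_i, j+1)` and `(v_{i-a}, j+1)`.
-/

open SimpleGraph

open Sum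

theorem SimpleGraph.apply_eq_self_of_adj_of_adj {V : Type*} {G : SimpleGraph V}
    {σ : Equiv.Perm V} (hσ : σ ∈ autSubgroup G) {x₁ x₂ y : V} (hx₁ : σ x₁ = x₁)
    (hx₂ : σ x₂ = x₂) (hy₁ : G.Adj y x₁) (hy₂ : G.Adj y x₂)
    (hcommon : ∀ z, G.Adj z x₁ → G.Adj z x₂ → σ z = z ∨ z = y) : σ y = y := by
  have h₁ : G.Adj (σ y) x₁ := by rw [← hx₁]; exact (hσ y x₁).2 hy₁
  have h₂ : G.Adj (σ y) x₂ := by rw [← hx₂]; exact (hσ y x₂).2 hy₂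
  rcases hcommon (σ y) h₁ h₂ with h | h
  · exact σ.injective h
  · exact h

@[simp]
theorem cdc_adj {V : Type*} (G : SimpleGraph V) (x y : V × ZMod 2) :
    (cdc G).Adj x y ↔ G.Adj x.1 y.1 ∧ x.2 ≠ y.2 :=
  Iff.rfl

theorem ZMod.two_ne_iff_eq_add_one {j k : ZMod 2} : j ≠ k ↔ k = j + 1 := by
  revert j k; decide

theorem ZMod.natCast_val_eq_castHom {n : ℕ} (h : 2 ∣ n) (i : ZMod n) :
    (i.val : ZMod 2) = ZMod.castHom h (ZMod 2) i := by
  rcases n with _ | n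
  · exact ZMod.natAbs_mod_two i
  · simp [ZMod.castHom_apply]

namespace roseWindow

variable {n : ℕ} {a r : ZMod n}

@[simp]
theorem adj_inl_inl (i i' : ZMod n) :
    (roseWindow n a r).Adj (inl i) (inl i') ↔ i ≠ i' ∧ (i' = i + 1 ∨ i = i' + 1) := by
  simp [roseWindow]

@[simp]
theorem adj_inl_inr (i k : ZMod n) :
    (roseWindow n a r).Adj (inl i) (inr k) ↔ i = k ∨ i = k + a := by
  simp [roseWindow]

@[simp]
theorem adj_inr_inl (k i : ZMod n) :
    (roseWindow n a r).Adj (inr k) (inl i) ↔ i = k ∨ i = k + a := by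
  simp [roseWindow]

@[simp]
theorem adj_inr_inr (k k' : ZMod n) :
    (roseWindow n a r).Adj (inr k) (inr k') ↔ k ≠ k' ∧ (k' = k + r ∨ k = k' + r) := by
  simp [roseWindow]

section automorphism

variable (p : ZMod n →+* ZMod 2)
  {σ : Equiv.Perm ((ZMod n ⊕ ZMod n) × ZMod 2)} (hσ : σ ∈ autSubgroup (cdc (roseWindow n a r)))
include hσ

theorem cdc_apply_inr_of_ne (hpa : p a = 0) (h2a : 2 * a ≠ 0)
    (hrim : ∀ i j, p i = j → σ (inl i, j) = (inl i, j)) {i : ZMod n} {j : ZMod 2}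
    (hij : p i ≠ j) : σ (inr i, j) = (inr i, j) := by
  rw [ne_comm, ZMod.two_ne_iff_eq_add_one] at hij
  have hia : p (i + a) = j + 1 := by rw [map_add, hpa, add_zero, hij]
  refine apply_eq_self_of_adj_of_adj hσ (hrim _ _ hij) (hrim _ _ hia)
    (by simp) (by simp) ?_
  rintro ⟨w | w, c⟩ h₁ h₂ <;> simp [ZMod.two_ne_iff_eq_add_one] at h₁ h₂
  · left
    apply hrim
    grind
  · right
    grind

theorem cdc_apply_inr_of_eq (hpa : p a = 0) (hpr : p r = 0) (h2a : 2 * a ≠ 0) (h4r : 4 * r ≠ 0)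
    (hrim : ∀ i j, p i = j → σ (inl i, j) = (inl i, j)) {i : ZMod n} {j : ZMod 2}
    (hij : p i = j) : σ (inr i, j) = (inr i, j) := by
  have hnbr (k : ZMod n) (hk : p k = j) : σ (inr k, j + 1) = (inr k, j + 1) :=
    cdc_apply_inr_of_ne p hσ hpa h2a hrim (by simp [hk])
  have hr : r ≠ 0 := by rintro rfl; simp at h4r
  refine apply_eq_self_of_adj_of_adj hσ (hnbr (i + r) (by simp [hpr, hij]))
    (hnbr (i - r) (by simp [hpr, hij])) (by simpa) (by simp [eq_comm (a := i), hr]) ?_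
  rintro ⟨w | w, c⟩ h₁ h₂ <;> simp [ZMod.two_ne_iff_eq_add_one] at h₁ h₂
  · left
    apply hrim
    grind
  · right
    grind

theorem cdc_apply_inl (h2a : 2 * a ≠ 0) (hhub : ∀ i j, σ (inr i, j) = (inr i, j))
    (i : ZMod n) (j : ZMod 2) : σ (inl i, j) = (inl i, j) := by
  refine apply_eq_self_of_adj_of_adj hσ (hhub i (j + 1)) (hhub (i - a) (j + 1))
    (by simp) (by simp) ?_
  rintro ⟨w | w, c⟩ h₁ h₂ <;> simp [ZMod.two_ne_iff_eq_add_one] at h₁ h₂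
  · right
    grind
  · exact .inl (hhub w c)

theorem cdc_apply_eq_self (hpa : p a = 0) (hpr : p r = 0) (h2a : 2 * a ≠ 0) (h4r : 4 * r ≠ 0)
    (hrim : ∀ i j, p i = j → σ (inl i, j) = (inl i, j)) (x : (ZMod n ⊕ ZMod n) × ZMod 2) :
    σ x = x := by
  have hhub (i : ZMod n) (j : ZMod 2) : σ (inr i, j) = (inr i, j) := by
    by_cases hij : p i = j
    · exact cdc_apply_inr_of_eq p hσ hpa hpr h2a h4r hrim hij
    · exact cdc_apply_inr_of_ne p hσ hpa h2a hrim hij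
  obtain ⟨i | i, j⟩ := x
  · exact cdc_apply_inl hσ h2a hhub i j
  · exact hhub i j

end automorphism

end roseWindow

theorem fix_rim_identity_11_general (n a r : ℕ) (hne : Even n) (hae : Even a) (hre : Even r) (h2a : ¬ n ∣ 2 * a) (h4r : ¬ n ∣ 4 * r) :
    let S1 : Set ((ZMod n ⊕ ZMod n) × ZMod 2) :=
      {p | ∃ (i : ZMod n) (j : ZMod 2), p = (Sum.inl i, j) ∧ ((ZMod.val i : ZMod 2) = j)}
    let S2 : Set ((ZMod n ⊕ ZMod n) × ZMod 2) :=
      {p | ∃ (i : ZMod n) (j : ZMod 2), p = (Sum.inl i, j) ∧ ((ZMod.val i : ZMod 2) ≠ j)}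
    ∀ σ ∈ autSubgroup (cdc (roseWindow n a r)),
      (∀ x ∈ S1, σ x = x) → (σ : _ → _) '' S2 = S2 → ∀ x, σ x = x := by
  intro S1 S2 σ hσ hS1 _
  let p := ZMod.castHom hne.two_dvd (ZMod 2)
  have hp (m : ℕ) (hm : Even m) : p m = 0 := by
    rwa [map_natCast, ZMod.natCast_eq_zero_iff_even]
  have hne_zero (m : ℕ) (hm : ¬ n ∣ m) : (m : ZMod n) ≠ 0 := by
    rwa [Ne, ZMod.natCast_eq_zero_iff]
  refine roseWindow.cdc_apply_eq_self p hσ (hp a hae) (hp r hre)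
    (by exact_mod_cast hne_zero _ h2a) (by exact_mod_cast hne_zero _ h4r) fun i j hij => ?_
  exact hS1 _ ⟨i, j, rfl, by rw [ZMod.natCast_val_eq_castHom hne.two_dvd, hij]⟩

/-- under the stated arithmetic conditions, the only automorphism of
`CDC(R_n(a,r))` fixing the rim cycle `S₁` pointwise and `S₂` setwise is the identity. -/
theorem fix_rim_identity_11 (n a r : ℕ) (hn : 3 ≤ n) (hne : Even n) (hae : Even a) (hre : Even r) (h2a : ¬ n ∣ 2 * a) (h4r : ¬ n ∣ 4 * r)
    (ha : (a : ZMod n) ≠ 0) (hr : (r : ZMod n) ≠ 0) :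
    let S1 : Set ((ZMod n ⊕ ZMod n) × ZMod 2) :=
      {p | ∃ (i : ZMod n) (j : ZMod 2), p = (Sum.inl i, j) ∧ ((ZMod.val i : ZMod 2) = j)}
    let S2 : Set ((ZMod n ⊕ ZMod n) × ZMod 2) :=
      {p | ∃ (i : ZMod n) (j : ZMod 2), p = (Sum.inl i, j) ∧ ((ZMod.val i : ZMod 2) ≠ j)}
    ∀ σ ∈ autSubgroup (cdc (roseWindow n a r)),
      (∀ x ∈ S1, σ x = x) → (σ : _ → _) '' S2 = S2 → ∀ x, σ x = x :=
  fix_rim_identity_11_general n a r hne hae hre h2a h4r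
end

section
/- Let d divide n and let φ: Z_n → Z_d be the canonical ring epimorphism. Then the map φ* sending u_{i,j} ↦ u_{φ(i),j} and v_{i,j} ↦ v_{φ(i),j} is a graph homomorphism from CDC(R_n(a,r)) onto CDC(R_d(φ(a), φ(r))), provided φ(a) ≠ 0 and φ(r) ≠ 0 in Z_d. -/
open SimpleGraph

namespace SimpleGraph.Hom

variable {V W : Type*} {G : SimpleGraph V} {H : SimpleGraph W}

def cdcMap (f : G →g H) : cdc G →g cdc H where
  toFun := Prod.map f id
  map_rel' h := ⟨f.map_adj h.1, h.2⟩

theorem cdcMap_surjective {f : G →g H} (hf : Function.Surjective f) :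
    Function.Surjective f.cdcMap :=
  hf.prodMap Function.surjective_id

end SimpleGraph.Hom

section RoseWindow

variable {n m : ℕ} (φ : ZMod n →+* ZMod m) {a r : ZMod n}

/-- A ring map preserves each of the four edge types; only the edges `uᵢuᵢ₊₁` and `vᵢvᵢ₊ᵣ`
could collapse to loops, which `φ 1 ≠ 0` (as `ZMod m` is nontrivial) and `φ r ≠ 0` prevent. -/
theorem roseWindow_adj_sumMap (hr : φ r ≠ 0) {x y : ZMod n ⊕ ZMod n}
    (h : (roseWindow n a r).Adj x y) :
    (roseWindow m (φ a) (φ r)).Adj (Sum.map φ φ x) (Sum.map φ φ y) := by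
  have : Nontrivial (ZMod m) := nontrivial_of_ne _ _ hr
  rw [roseWindow, fromRel_adj] at h ⊢
  obtain ⟨-, h⟩ := h
  rcases x with i | i <;> rcases y with j | j <;>
    simp only [Sum.map_inl, Sum.map_inr, Sum.inl.injEq, Sum.inr.injEq, ne_eq, reduceCtorEq,
      not_false_eq_true, true_and, or_false, false_or] at h ⊢ <;>
    rcases h with rfl | rfl <;> simp [hr]

def roseWindowHom (hr : φ r ≠ 0) : roseWindow n a r →g roseWindow m (φ a) (φ r) where
  toFun := Sum.map φ φ
  map_rel' := roseWindow_adj_sumMap φ hr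

end RoseWindow

theorem cdc_quotient_hom_general (n d a r : ℕ) (hdn : d ∣ n)
    (hr : (r : ZMod d) ≠ 0) :
    ∃ f : cdc (roseWindow n a r) →g cdc (roseWindow d a r),
      Function.Surjective f ∧
      (∀ (i : ZMod n) (j : ZMod 2),
        f (Sum.inl i, j) = (Sum.inl (ZMod.castHom hdn (ZMod d) i), j)) ∧
      (∀ (i : ZMod n) (j : ZMod 2),
        f (Sum.inr i, j) = (Sum.inr (ZMod.castHom hdn (ZMod d) i), j)) := by
  set φ := ZMod.castHom hdn (ZMod d)
  have hφr : φ r ≠ 0 := by rwa [map_natCast]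
  have hcast : cdc (roseWindow d (φ a) (φ r)) = cdc (roseWindow d a r) := by
    simp only [map_natCast]
  have hφ : Function.Surjective φ := ZMod.castHom_surjective hdn
  refine ⟨(Hom.ofLE hcast.le).comp (roseWindowHom φ hφr).cdcMap, ?_,
    fun _ _ => rfl, fun _ _ => rfl⟩
  exact Hom.cdcMap_surjective (hφ.sumMap hφ)

/-- for `d ∣ n`, reduction of indices mod `d` gives a surjective graph
homomorphism `CDC(R_n(a,r)) → CDC(R_d(a mod d, r mod d))`. -/
theorem cdc_quotient_hom (n d a r : ℕ) (hn : 3 ≤ n) (hd : 3 ≤ d) (hdn : d ∣ n)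
    (ha : (a : ZMod d) ≠ 0) (hr : (r : ZMod d) ≠ 0) :
    ∃ f : cdc (roseWindow n a r) →g cdc (roseWindow d a r),
      Function.Surjective f ∧
      (∀ (i : ZMod n) (j : ZMod 2),
        f (Sum.inl i, j) = (Sum.inl (ZMod.castHom hdn (ZMod d) i), j)) ∧
      (∀ (i : ZMod n) (j : ZMod 2),
        f (Sum.inr i, j) = (Sum.inr (ZMod.castHom hdn (ZMod d) i), j)) :=
  cdc_quotient_hom_general n d a r hdn hr
end
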